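/- arXiv:2208.03485 — 3 statements merged into one kernel-verified Lean document; each statement's English description precedes it below -/
import Mathlib

section
/- Let I be a finite index set of cardinality N, let b_i ∈ [0,1] for all i ∈ I, and let ε ≥ 0. Then ∏_{i∈I} (b_i − ε) ≥ ∏_{i∈I} b_i − (1/2)·[(1+ε)^N − (1−ε)^N]. -/
theorem prod_sub_ge_prod_sub_closed_form {ι : Type*} [DecidableEq ι]
    (I : Finset ι) (b : ι → ℝ) (ε : ℝ)
    (hb : ∀ i ∈ I, b i ∈ Set.Icc (0 : ℝ) 1) (hε : 0 ≤ ε) :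
    ∏ i ∈ I, (b i - ε)
    ≥ ∏ i ∈ I, b i - (1 / 2) * ((1 + ε) ^ I.card - (1 - ε) ^ I.card) := by
  have h1 : ∏ i ∈ I, (b i - ε)
      = ∑ t ∈ I.powerset, (∏ i ∈ t, b i) * (-ε) ^ (I \ t).card := by
    simp only [sub_eq_add_neg]
    rw [Finset.prod_add]
    exact Finset.sum_congr rfl fun t _ => by rw [Finset.prod_const]
  have h2 : (1 + ε) ^ I.card = ∑ t ∈ I.powerset, ε ^ (I \ t).card := by
    rw [← Finset.prod_const, Finset.prod_add]
    exact Finset.sum_congr rfl fun t ht => by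
      rw [Finset.prod_const, Finset.prod_const, one_pow, one_mul]
  have h3 : (1 - ε) ^ I.card = ∑ t ∈ I.powerset, (-ε) ^ (I \ t).card := by
    rw [sub_eq_add_neg, ← Finset.prod_const, Finset.prod_add]
    exact Finset.sum_congr rfl fun t ht => by
      rw [Finset.prod_const, Finset.prod_const, one_pow, one_mul]
  rw [ge_iff_le, sub_le_iff_le_add, h1, h2, h3, ← Finset.sum_sub_distrib,
    Finset.mul_sum, ← Finset.sum_add_distrib]
  have key : ∀ t ∈ I.powerset,
      (0:ℝ) ≤ (∏ i ∈ t, b i) * (-ε) ^ (I \ t).card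
        + 1 / 2 * (ε ^ (I \ t).card - (-ε) ^ (I \ t).card) := by
    intro t ht
    rw [Finset.mem_powerset] at ht
    have hb0 : 0 ≤ ∏ i ∈ t, b i :=
      Finset.prod_nonneg fun i hi => (hb i (ht hi)).1
    have hb1 : ∏ i ∈ t, b i ≤ 1 :=
      Finset.prod_le_one (fun i hi => (hb i (ht hi)).1) fun i hi => (hb i (ht hi)).2
    set k := (I \ t).card
    rcases Nat.even_or_odd k with hk | hk
    · rw [hk.neg_pow]
      have : 0 ≤ ε ^ k := pow_nonneg hε k
      nlinarith
    · rw [hk.neg_pow]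
      have : 0 ≤ ε ^ k := pow_nonneg hε k
      nlinarith
  have hI : I ∈ I.powerset := Finset.mem_powerset_self I
  have := Finset.single_le_sum key hI
  simp only [Finset.sdiff_self, Finset.card_empty, pow_zero, mul_one, sub_self,
    mul_zero, add_zero] at this
  linarith
end

section
/- Let I be a finite index set of cardinality N, and for each i ∈ I let a_i ∈ [0,1], b_i ∈ [0,1], and ε_i ≥ 0 satisfy a_i ≥ b_i − ε_i. Let ε be any real number with ε_i ≤ ε for all i ∈ I. Then ∏_{i∈I} a_i ≥ ∏_{i∈I} b_i − (1/2)·[(1+ε)^N − (1−ε)^N]. -/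
private lemma key_sum (ε : ℝ) (hε : 0 ≤ ε) (N : ℕ) :
    2 ≤ (1 + ε) ^ N + (1 - ε) ^ N := by
  have h1 : (1 + ε) ^ N = ∑ k ∈ Finset.range (N + 1), ε ^ k * (N.choose k : ℝ) := by
    rw [add_comm, add_pow]; simp
  have h2 : (1 - ε) ^ N = ∑ k ∈ Finset.range (N + 1), (-ε) ^ k * (N.choose k : ℝ) := by
    rw [sub_eq_add_neg, add_comm, add_pow]; simp
  rw [h1, h2, ← Finset.sum_add_distrib]
  have h0 : (0 : ℕ) ∈ Finset.range (N + 1) := by simp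
  have := Finset.single_le_sum (f := fun k => ε ^ k * (N.choose k : ℝ) + (-ε) ^ k * (N.choose k : ℝ))
    (fun k _ => by
      rcases Nat.even_or_odd k with hk | hk
      · have : (-ε) ^ k = ε ^ k := hk.neg_pow ε
        rw [this]
        positivity
      · have : (-ε) ^ k = -(ε ^ k) := hk.neg_pow ε
        rw [this]
        ring_nf
        positivity) h0
  simp at this
  linarith

private lemma D_nonneg (ε : ℝ) (hε : 0 ≤ ε) (N : ℕ) :
    0 ≤ (1 / 2) * ((1 + ε) ^ N - (1 - ε) ^ N) := by
  have h1 : (1 - ε) ^ N ≤ |1 - ε| ^ N := by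
    calc (1 - ε) ^ N ≤ |(1 - ε) ^ N| := le_abs_self _
    _ = |1 - ε| ^ N := by rw [abs_pow]
  have h2 : |1 - ε| ^ N ≤ (1 + ε) ^ N :=
    pow_le_pow_left₀ (abs_nonneg _) (abs_le.mpr ⟨by linarith, by linarith⟩) N
  linarith

private lemma D_step (ε : ℝ) (hε : 0 ≤ ε) (N : ℕ) :
    (1 / 2) * ((1 + ε) ^ N - (1 - ε) ^ N) + ε
      ≤ (1 / 2) * ((1 + ε) ^ (N + 1) - (1 - ε) ^ (N + 1)) := by
  have hk := key_sum ε hε N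
  have h : (1 / 2) * ((1 + ε) ^ (N + 1) - (1 - ε) ^ (N + 1))
      - ((1 / 2) * ((1 + ε) ^ N - (1 - ε) ^ N))
      = (ε / 2) * ((1 + ε) ^ N + (1 - ε) ^ N) := by
    ring
  nlinarith [mul_le_mul_of_nonneg_left hk (by linarith : (0:ℝ) ≤ ε / 2)]

private lemma comp_aux {ι : Type*} (ε : ℝ) (hε0 : 0 ≤ ε)
    (I : Finset ι) (a b : ι → ℝ) (εi : ι → ℝ)
    (ha : ∀ i ∈ I, a i ∈ Set.Icc (0 : ℝ) 1)
    (hb : ∀ i ∈ I, b i ∈ Set.Icc (0 : ℝ) 1)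
    (hab : ∀ i ∈ I, a i ≥ b i - εi i)
    (hε : ∀ i ∈ I, εi i ≤ ε) :
    ∏ i ∈ I, b i - ∏ i ∈ I, a i
      ≤ (1 / 2) * ((1 + ε) ^ I.card - (1 - ε) ^ I.card) := by
  induction I using Finset.cons_induction with
  | empty => simp
  | cons i I hiI IH =>
    have ha' : ∀ j ∈ I, a j ∈ Set.Icc (0 : ℝ) 1 := fun j hj => ha j (by simp [hj])
    have hb' : ∀ j ∈ I, b j ∈ Set.Icc (0 : ℝ) 1 := fun j hj => hb j (by simp [hj])
    have IH' := IH ha' hb' (fun j hj => hab j (by simp [hj])) (fun j hj => hε j (by simp [hj]))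
    have hPa0 : 0 ≤ ∏ j ∈ I, a j := Finset.prod_nonneg fun j hj => (ha' j hj).1
    have hPa1 : ∏ j ∈ I, a j ≤ 1 := Finset.prod_le_one (fun j hj => (ha' j hj).1)
      (fun j hj => (ha' j hj).2)
    have hbi := hb i (by simp)
    have hai : a i ≥ b i - ε := le_trans (by linarith [hε i (Finset.mem_cons_self i I)])
      (hab i (Finset.mem_cons_self i I))
    have hD0 := D_nonneg ε hε0 I.card
    have hDs := D_step ε hε0 I.card
    rw [Finset.prod_cons, Finset.prod_cons, Finset.card_cons]
    set Pa := ∏ j ∈ I, a j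
    set Pb := ∏ j ∈ I, b j
    set D := (1 / 2) * ((1 + ε) ^ I.card - (1 - ε) ^ I.card)
    have step1 : b i * Pb - a i * Pa ≤ b i * Pb - (b i - ε) * Pa := by
      nlinarith
    have step2 : b i * Pb - (b i - ε) * Pa = b i * (Pb - Pa) + ε * Pa := by ring
    have step3 : b i * (Pb - Pa) ≤ D := by
      rcases le_or_gt (Pb - Pa) 0 with h | h
      · nlinarith [hbi.1]
      · nlinarith [hbi.2, hbi.1]
    have step4 : ε * Pa ≤ ε := by nlinarith
    linarith

theorem compositional_lower_bound {ι : Type*}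
    (I : Finset ι) (a b : ι → ℝ) (εi : ι → ℝ) (ε : ℝ)
    (ha : ∀ i ∈ I, a i ∈ Set.Icc (0 : ℝ) 1)
    (hb : ∀ i ∈ I, b i ∈ Set.Icc (0 : ℝ) 1)
    (hεi : ∀ i ∈ I, 0 ≤ εi i)
    (hab : ∀ i ∈ I, a i ≥ b i - εi i)
    (hε : ∀ i ∈ I, εi i ≤ ε) :
    ∏ i ∈ I, a i
    ≥ ∏ i ∈ I, b i - (1 / 2) * ((1 + ε) ^ I.card - (1 - ε) ^ I.card) := by
  rcases I.eq_empty_or_nonempty with h | ⟨i, hi⟩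
  · subst h; simp
  · have hε0 : 0 ≤ ε := le_trans (hεi i hi) (hε i hi)
    have := comp_aux ε hε0 I a b εi ha hb hab hε
    linarith
end

section
/- Let S and A be nonempty finite types, let T : S → A → S → ℝ satisfy T(s,a,s') ≥ 0 and Σ_{s'} T(s,a,s') = 1 for all s, a, let R : S → A → S → ℝ be any function, let m : S → Bool designate maximizer states, and let γ ∈ [0,1). Then the minimax Bellman operator B, defined by (B Q)(s,a) = Σ_{s'} T(s,a,s') · (R(s,a,s') + γ · opt_{a' ∈ A} Q(s',a')) with opt = max if m(s') = true and min otherwise, has a unique fixed point Q* : S → A → ℝ, i.e., there exists exactly one Q* with B Q* = Q*. -/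
/-! The Bellman operator factors through the state values `V s = opt_a Q(s, a)`. Taking a max or
a min over finitely many actions is 1-Lipschitz for the sup norm, and averaging the discounted
return against the probability vector `T(s, a, ·)` is `γ`-Lipschitz, so `B` is a `γ`-contraction
of the complete space `S → A → ℝ` and Banach's fixed-point theorem applies. -/

open Finset NNReal

theorem lipschitzWith_pi {α ι : Type*} [PseudoMetricSpace α] [Fintype ι] {β : ι → Type*}
    [∀ i, PseudoMetricSpace (β i)] {K : ℝ≥0} {f : α → ∀ i, β i}
    (hf : ∀ i, LipschitzWith K fun x => f x i) : LipschitzWith K f :=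
  LipschitzWith.of_dist_le_mul fun x y =>
    (dist_pi_le_iff (by positivity)).2 fun i => (hf i).dist_le_mul x y

theorem LipschitzWith.finset_sup' {α ι : Type*} [PseudoMetricSpace α] {K : ℝ≥0} {s : Finset ι}
    (hs : s.Nonempty) {f : ι → α → ℝ} (hf : ∀ i ∈ s, LipschitzWith K (f i)) :
    LipschitzWith K fun x => s.sup' hs fun i => f i x := by
  have hsup := s.sup'_induction hs f (p := LipschitzWith K)
    (fun g hg h hh => by simpa only [max_self, Pi.sup_def] using hg.max hh) hf
  exact funext (s.sup'_apply hs f) ▸ hsup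

theorem LipschitzWith.finset_inf' {α ι : Type*} [PseudoMetricSpace α] {K : ℝ≥0} {s : Finset ι}
    (hs : s.Nonempty) {f : ι → α → ℝ} (hf : ∀ i ∈ s, LipschitzWith K (f i)) :
    LipschitzWith K fun x => s.inf' hs fun i => f i x := by
  have hinf := s.inf'_induction hs f (p := LipschitzWith K)
    (fun g hg h hh => by simpa only [max_self, Pi.inf_def] using hg.min hh) hf
  exact funext (s.inf'_apply hs f) ▸ hinf

theorem lipschitzWith_sum_mul_add_mul {ι : Type*} [Fintype ι] {w : ι → ℝ}
    (hw0 : ∀ i, 0 ≤ w i) (hw1 : ∑ i, w i = 1) (c : ι → ℝ) (γ : ℝ≥0) :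
    LipschitzWith γ fun x : ι → ℝ => ∑ i, w i * (c i + γ * x i) := by
  refine LipschitzWith.of_dist_le_mul fun x y => ?_
  rw [Real.dist_eq, ← sum_sub_distrib]
  calc |∑ i, (w i * (c i + γ * x i) - w i * (c i + γ * y i))|
      ≤ ∑ i, |w i * (c i + γ * x i) - w i * (c i + γ * y i)| := abs_sum_le_sum_abs _ _
    _ ≤ ∑ i, w i * (γ * dist x y) := by
      gcongr with i
      rw [← mul_sub, add_sub_add_left_eq_sub, ← mul_sub, abs_mul, abs_mul, abs_of_nonneg (hw0 i),
        NNReal.abs_eq, ← Real.dist_eq]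
      exact mul_le_mul_of_nonneg_left
        (mul_le_mul_of_nonneg_left (dist_le_pi_dist x y i) γ.2) (hw0 i)
    _ = γ * dist x y := by rw [← sum_mul, hw1, one_mul]

section MinimaxBellman

variable {S A : Type*} [Fintype S] [Fintype A]

noncomputable def minimaxValue [Nonempty A] (m : S → Bool) (Q : S → A → ℝ) (s : S) : ℝ :=
  if m s then univ.sup' univ_nonempty (Q s) else univ.inf' univ_nonempty (Q s)

theorem lipschitzWith_minimaxValue [Nonempty A] (m : S → Bool) :
    LipschitzWith 1 (minimaxValue (A := A) m) := by
  refine lipschitzWith_pi fun s => ?_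
  have hQ : ∀ a ∈ univ, LipschitzWith 1 fun Q : S → A → ℝ => Q s a := fun a _ => by
    simpa only [Function.comp_def, mul_one] using
      (LipschitzWith.eval a).comp (LipschitzWith.eval (α := fun _ => A → ℝ) s)
  unfold minimaxValue
  cases m s
  · exact LipschitzWith.finset_inf' univ_nonempty hQ
  · exact LipschitzWith.finset_sup' univ_nonempty hQ

def bellmanBackup (T R : S → A → S → ℝ) (γ : ℝ) (V : S → ℝ) (s : S) (a : A) : ℝ :=
  ∑ s', T s a s' * (R s a s' + γ * V s')

theorem lipschitzWith_bellmanBackup {T : S → A → S → ℝ} (hT0 : ∀ s a s', 0 ≤ T s a s')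
    (hT1 : ∀ s a, ∑ s', T s a s' = 1) (R : S → A → S → ℝ) (γ : ℝ≥0) :
    LipschitzWith γ (bellmanBackup T R γ) :=
  lipschitzWith_pi fun s => lipschitzWith_pi fun a =>
    lipschitzWith_sum_mul_add_mul (hT0 s a) (hT1 s a) (R s a) γ

end MinimaxBellman

theorem minimax_bellman_unique_fixed_point_general
    {S A : Type*} [Fintype S] [Fintype A] [Nonempty A]
    (T : S → A → S → ℝ) (R : S → A → S → ℝ) (m : S → Bool) (γ : ℝ)
    (hT0 : ∀ s a s', 0 ≤ T s a s')
    (hT1 : ∀ s a, ∑ s', T s a s' = 1)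
    (hγ0 : 0 ≤ γ) (hγ1 : γ < 1)
    (B : (S → A → ℝ) → (S → A → ℝ))
    (hB : ∀ Q s a, B Q s a
      = ∑ s', T s a s' * (R s a s'
          + γ * (if m s' then Finset.univ.sup' Finset.univ_nonempty (fun a' => Q s' a')
                 else Finset.univ.inf' Finset.univ_nonempty (fun a' => Q s' a')))) :
    ∃! Qstar : S → A → ℝ, B Qstar = Qstar := by
  lift γ to ℝ≥0 using hγ0
  have hB_comp : B = bellmanBackup T R γ ∘ minimaxValue m := by
    ext Q s a
    exact hB Q s a
  have hB_contracting : ContractingWith γ B := by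
    refine ⟨mod_cast hγ1, ?_⟩
    simpa only [hB_comp, mul_one] using
      (lipschitzWith_bellmanBackup hT0 hT1 R γ).comp (lipschitzWith_minimaxValue m)
  exact ⟨_, hB_contracting.fixedPoint_isFixedPt, fun Q hQ => hB_contracting.fixedPoint_unique hQ⟩

theorem minimax_bellman_unique_fixed_point
    {S A : Type*} [Fintype S] [Fintype A] [Nonempty S] [Nonempty A]
    (T : S → A → S → ℝ) (R : S → A → S → ℝ) (m : S → Bool) (γ : ℝ)
    (hT0 : ∀ s a s', 0 ≤ T s a s')
    (hT1 : ∀ s a, ∑ s', T s a s' = 1)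
    (hγ0 : 0 ≤ γ) (hγ1 : γ < 1)
    (B : (S → A → ℝ) → (S → A → ℝ))
    (hB : ∀ Q s a, B Q s a
      = ∑ s', T s a s' * (R s a s'
          + γ * (if m s' then Finset.univ.sup' Finset.univ_nonempty (fun a' => Q s' a')
                 else Finset.univ.inf' Finset.univ_nonempty (fun a' => Q s' a')))) :
    ∃! Qstar : S → A → ℝ, B Qstar = Qstar :=
  minimax_bellman_unique_fixed_point_general T R m γ hT0 hT1 hγ0 hγ1 B hB
end
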